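/- There exists a constant $C > 0$ such that for every $0 < \varepsilon < 1/2$ and every function $\varphi \in W^{1,2}(B_1 \setminus B_\varepsilon)$ on the planar annulus $B_1 \setminus B_\varepsilon \subset \mathbb{R}^2$, one has $\int_{\partial B_\varepsilon} |\varphi|^2 \, d\mathcal{H}^1 \le C\, \varepsilon \log(1/\varepsilon)\, \|\varphi\|^2_{W^{1,2}(B_1\setminus B_\varepsilon)}$. -/

import Mathlib

/-!
Along a ray, `φ(a u) = φ(r u) - ∫_a^r ∂ₛφ(s u) ds`, and Cauchy–Schwarz against the weight `1/s`
bounds the square of that integral by `log(r/a) ∫_a^r |∂ₛφ(s u)|² s ds`; this weight is where the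
factor `log(1/ε)` comes from. Averaging `φ(a u)² ≤ 2 φ(r u)² + 2 log(b/a) ∫_a^b |∇φ(s u)|² s ds`
against `r dr` over `[a, b]` and integrating over the direction `u` turns the right-hand side into
integrals over the annulus in polar coordinates.
-/

open Real MeasureTheory Set

noncomputable def polarPoint (r θ : ℝ) : EuclideanSpace ℝ (Fin 2) :=
  (EuclideanSpace.equiv (Fin 2) ℝ).symm ![r * cos θ, r * sin θ]

lemma polarPoint_eq_smul (r θ : ℝ) : polarPoint r θ = r • polarPoint 1 θ := by
  ext i; fin_cases i <;> simp [polarPoint]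

lemma norm_polarPoint (r θ : ℝ) : ‖polarPoint r θ‖ = |r| := by
  simp [polarPoint, EuclideanSpace.norm_eq, Fin.sum_univ_two, mul_pow, ← mul_add, sqrt_sq_eq_abs]

lemma polarPoint_add_two_pi (r θ : ℝ) : polarPoint r (θ + 2 * π) = polarPoint r θ := by
  simp [polarPoint]

@[fun_prop]
lemma Continuous.polarPoint {α : Type*} [TopologicalSpace α] {f g : α → ℝ} (hf : Continuous f)
    (hg : Continuous g) : Continuous fun x ↦ polarPoint (f x) (g x) :=
  (EuclideanSpace.equiv (Fin 2) ℝ).symm.continuous.comp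
    (continuous_pi fun i ↦ by fin_cases i <;> simp <;> fun_prop)

noncomputable def euclideanPlaneEquivProd : EuclideanSpace ℝ (Fin 2) ≃ᵐ ℝ × ℝ :=
  (MeasurableEquiv.toLp 2 (Fin 2 → ℝ)).symm.trans MeasurableEquiv.finTwoArrow

lemma measurePreserving_euclideanPlaneEquivProd :
    MeasurePreserving euclideanPlaneEquivProd volume volume :=
  (volume_preserving_finTwoArrow ℝ).comp
    (EuclideanSpace.volume_preserving_symm_measurableEquiv_toLp (Fin 2))

lemma euclideanPlaneEquivProd_symm_polarCoord_symm (p : ℝ × ℝ) :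
    euclideanPlaneEquivProd.symm (polarCoord.symm p) = polarPoint p.1 p.2 := rfl

lemma integral_annulus_eq_integral_polar {a b : ℝ} (ha : 0 < a) (hab : a ≤ b)
    {F : EuclideanSpace ℝ (Fin 2) → ℝ} (hF : Continuous F) :
    ∫ x in Metric.closedBall 0 b \ Metric.ball 0 a, F x
      = ∫ θ in 0..2 * π, ∫ r in a..b, F (polarPoint r θ) * r := by
  set K := Metric.closedBall (0 : EuclideanSpace ℝ (Fin 2)) b \ Metric.ball 0 a
  set G : ℝ × ℝ → ℝ := fun p ↦ F (polarPoint p.1 p.2) * p.1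
  have hK : MeasurableSet K := measurableSet_closedBall.diff measurableSet_ball
  have hG : Continuous G := by fun_prop
  have hpolar : polarCoord.target ∩ (fun p ↦ polarPoint p.1 p.2) ⁻¹' K
      = Icc a b ×ˢ Ioo (-π) π := by
    ext ⟨r, θ⟩
    simp only [polarCoord_target, K, mem_inter_iff, mem_prod, mem_preimage, mem_sdiff,
      Metric.mem_closedBall, Metric.mem_ball, dist_zero_right, norm_polarPoint, mem_Ioi, mem_Icc,
      not_lt]
    constructor
    · rintro ⟨⟨hr, hθ⟩, hb, ha⟩
      exact ⟨⟨by rwa [abs_of_pos hr] at ha, by rwa [abs_of_pos hr] at hb⟩, hθ⟩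
    · rintro ⟨⟨ha', hb⟩, hθ⟩
      have hr : 0 < r := ha.trans_le ha'
      exact ⟨⟨hr, hθ⟩, by rwa [abs_of_pos hr], by rwa [abs_of_pos hr]⟩
  have hperiodic : Function.Periodic (fun θ ↦ ∫ r in a..b, G (r, θ)) (2 * π) := fun θ ↦ by
    simp only [G, polarPoint_add_two_pi]
  calc ∫ x in K, F x
      = ∫ p, K.indicator F (euclideanPlaneEquivProd.symm p) := by
        rw [← integral_indicator hK,
          (measurePreserving_euclideanPlaneEquivProd.symm _).integral_comp']
    _ = ∫ p in polarCoord.target, ((fun p ↦ polarPoint p.1 p.2) ⁻¹' K).indicator G p := by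
        rw [← integral_comp_polarCoord_symm]
        refine setIntegral_congr_fun polarCoord.open_target.measurableSet fun p _ ↦ ?_
        rw [euclideanPlaneEquivProd_symm_polarCoord_symm]
        by_cases h : polarPoint p.1 p.2 ∈ K <;> simp [indicator, h, G, mul_comm]
    _ = ∫ p in Icc a b ×ˢ Ioo (-π) π, G p := by
        rw [setIntegral_indicator
          (hK.preimage (continuous_fst.polarPoint continuous_snd).measurable), hpolar]
    _ = ∫ θ in -π..π, ∫ r in a..b, G (r, θ) := by
        rw [Measure.volume_eq_prod, ← setIntegral_prod_swap, setIntegral_prod _ ?_,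
          intervalIntegral.integral_of_le (by linarith [pi_pos]), ← integral_Ioc_eq_integral_Ioo]
        · refine setIntegral_congr_fun measurableSet_Ioc fun θ _ ↦ ?_
          rw [intervalIntegral.integral_of_le hab, integral_Icc_eq_integral_Ioc]
          rfl
        · exact (hG.comp continuous_swap).continuousOn.integrableOn_compact
            (isCompact_Icc.prod isCompact_Icc) |>.mono_set
            (prod_mono Ioo_subset_Icc_self subset_rfl)
    _ = ∫ θ in 0..2 * π, ∫ r in a..b, G (r, θ) := by
        simpa [neg_add_eq_sub, two_mul] using hperiodic.intervalIntegral_add_eq (-π) 0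

lemma sq_integral_mul_le_integral_sq_mul_integral_sq {α : Type*} [MeasurableSpace α]
    {μ : Measure α} {f g : α → ℝ} (hf₀ : 0 ≤ᵐ[μ] f) (hg₀ : 0 ≤ᵐ[μ] g) (hf : MemLp f 2 μ)
    (hg : MemLp g 2 μ) :
    (∫ x, f x * g x ∂μ) ^ 2 ≤ (∫ x, f x ^ 2 ∂μ) * ∫ x, g x ^ 2 ∂μ := by
  have holder := integral_mul_le_Lp_mul_Lq_of_nonneg Real.HolderConjugate.two_two hf₀ hg₀
    (by simpa using hf) (by simpa using hg)
  simp only [rpow_two] at holder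
  have hfg : 0 ≤ ∫ x, f x * g x ∂μ :=
    integral_nonneg_of_ae (by filter_upwards [hf₀, hg₀] with x hfx hgx using mul_nonneg hfx hgx)
  calc (∫ x, f x * g x ∂μ) ^ 2
      ≤ ((∫ x, f x ^ 2 ∂μ) ^ (1 / (2 : ℝ)) * (∫ x, g x ^ 2 ∂μ) ^ (1 / (2 : ℝ))) ^ 2 :=
        pow_le_pow_left₀ hfg holder 2
    _ = (∫ x, f x ^ 2 ∂μ) * ∫ x, g x ^ 2 ∂μ := by
        rw [mul_pow, ← sqrt_eq_rpow, ← sqrt_eq_rpow, sq_sqrt (integral_nonneg fun x ↦ sq_nonneg _),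
          sq_sqrt (integral_nonneg fun x ↦ sq_nonneg _)]

lemma sq_integral_abs_le_log_mul_integral_sq_mul {a b : ℝ} (ha : 0 < a) (hab : a ≤ b)
    {f : ℝ → ℝ} (hf : ContinuousOn f (Icc a b)) :
    (∫ s in a..b, |f s|) ^ 2 ≤ log (b / a) * ∫ s in a..b, f s ^ 2 * s := by
  have hpos : ∀ s ∈ Icc a b, 0 < s := fun s hs ↦ ha.trans_le hs.1
  have hsqrt : ContinuousOn (fun s ↦ (√s)⁻¹) (Icc a b) :=
    continuous_sqrt.continuousOn.inv₀ fun s hs ↦ (sqrt_pos.2 (hpos s hs)).ne'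
  have hweighted : ContinuousOn (fun s ↦ |f s| * √s) (Icc a b) :=
    hf.abs.mul continuous_sqrt.continuousOn
  have memLp_two {u : ℝ → ℝ} (hu : ContinuousOn u (Icc a b)) :
      MemLp u 2 (volume.restrict (Ioc a b)) :=
    (memLp_two_iff_integrable_sq
      ((hu.mono Ioc_subset_Icc_self).aestronglyMeasurable measurableSet_Ioc)).2
      ((hu.pow 2).integrableOn_Icc.mono_set Ioc_subset_Icc_self)
  have hcs := sq_integral_mul_le_integral_sq_mul_integral_sq
    (ae_of_all _ fun s ↦ inv_nonneg.2 (sqrt_nonneg s)) (ae_of_all _ fun s ↦ by positivity)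
    (memLp_two hsqrt) (memLp_two hweighted)
  have hinv : ∫ s in Ioc a b, (√s)⁻¹ ^ 2 = log (b / a) := by
    rw [← integral_inv_of_pos ha (ha.trans_le hab), intervalIntegral.integral_of_le hab]
    refine setIntegral_congr_fun measurableSet_Ioc fun s hs ↦ ?_
    rw [inv_pow, sq_sqrt (hpos s (Ioc_subset_Icc_self hs)).le]
  rw [intervalIntegral.integral_of_le hab, intervalIntegral.integral_of_le hab, ← hinv]
  convert hcs using 2
  · refine setIntegral_congr_fun measurableSet_Ioc fun s hs ↦ ?_
    have := sqrt_pos.2 (hpos s (Ioc_subset_Icc_self hs))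
    field_simp
  · refine setIntegral_congr_fun measurableSet_Ioc fun s hs ↦ ?_
    rw [mul_pow, sq_abs, sq_sqrt (hpos s (Ioc_subset_Icc_self hs)).le]

lemma sq_sub_le_log_mul_integral_sq_deriv_mul {a b : ℝ} (ha : 0 < a) (hab : a ≤ b)
    {g g' : ℝ → ℝ} (hg : ∀ s ∈ Icc a b, HasDerivAt g (g' s) s) (hg' : ContinuousOn g' (Icc a b)) :
    (g b - g a) ^ 2 ≤ log (b / a) * ∫ s in a..b, g' s ^ 2 * s := by
  have hftc : ∫ s in a..b, g' s = g b - g a :=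
    intervalIntegral.integral_eq_sub_of_hasDerivAt (by rwa [uIcc_of_le hab])
      (hg'.intervalIntegrable_of_Icc hab)
  rw [← hftc]
  calc (∫ s in a..b, g' s) ^ 2 = |∫ s in a..b, g' s| ^ 2 := (sq_abs _).symm
    _ ≤ (∫ s in a..b, |g' s|) ^ 2 :=
        pow_le_pow_left₀ (abs_nonneg _) (intervalIntegral.abs_integral_le_integral_abs hab) 2
    _ ≤ _ := sq_integral_abs_le_log_mul_integral_sq_mul ha hab hg'

lemma sq_left_mul_le_of_hasDerivAt {a b : ℝ} (ha : 0 < a) (hab : a ≤ b)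
    {g g' : ℝ → ℝ} (hg : ∀ s ∈ Icc a b, HasDerivAt g (g' s) s) (hg' : ContinuousOn g' (Icc a b)) :
    g a ^ 2 * ((b ^ 2 - a ^ 2) / 2)
      ≤ 2 * (∫ r in a..b, g r ^ 2 * r)
        + (b ^ 2 - a ^ 2) * log (b / a) * ∫ s in a..b, g' s ^ 2 * s := by
  set J := ∫ s in a..b, g' s ^ 2 * s
  have hgc : ContinuousOn g (Icc a b) := fun s hs ↦ (hg s hs).continuousAt.continuousWithinAt
  have hpointwise : ∀ r ∈ Icc a b,
      g a ^ 2 * r ≤ 2 * (g r ^ 2 * r) + 2 * (log (b / a) * J) * r := by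
    intro r hr
    have hdiff := sq_sub_le_log_mul_integral_sq_deriv_mul ha hr.1
      (fun s hs ↦ hg s ⟨hs.1, hs.2.trans hr.2⟩) (hg'.mono (Icc_subset_Icc_right hr.2))
    have hlog : log (r / a) ≤ log (b / a) :=
      log_le_log (div_pos (ha.trans_le hr.1) ha) (div_le_div_of_nonneg_right hr.2 ha.le)
    have hJ : ∫ s in a..r, g' s ^ 2 * s ≤ J :=
      intervalIntegral.integral_mono_interval le_rfl hr.1 hr.2
        ((ae_restrict_iff' measurableSet_Ioc).2 (ae_of_all _ fun s hs ↦
          mul_nonneg (sq_nonneg _) (ha.trans hs.1).le))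
        (((hg'.pow 2).mul continuousOn_id).intervalIntegrable_of_Icc hab)
    have hJ₀ : 0 ≤ ∫ s in a..r, g' s ^ 2 * s := intervalIntegral.integral_nonneg hr.1
      fun s hs ↦ mul_nonneg (sq_nonneg _) (ha.le.trans hs.1)
    have hlog₀ : 0 ≤ log (r / a) := log_nonneg ((one_le_div ha).2 hr.1)
    have hsq : g a ^ 2 ≤ 2 * g r ^ 2 + 2 * (log (b / a) * J) := by
      nlinarith [sq_nonneg (g r + (g r - g a)), mul_le_mul hlog hJ hJ₀ (hlog₀.trans hlog)]
    linarith [mul_le_mul_of_nonneg_right hsq (ha.le.trans hr.1)]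
  have hint : ∫ r in a..b, g a ^ 2 * r
      ≤ ∫ r in a..b, (2 * (g r ^ 2 * r) + 2 * (log (b / a) * J) * r) :=
    intervalIntegral.integral_mono_on hab
    ((continuous_const.mul continuous_id).intervalIntegrable (μ := volume) a b)
    ((continuousOn_const.mul ((hgc.pow 2).mul continuousOn_id)).add
      (continuousOn_const.mul continuousOn_id) |>.intervalIntegrable_of_Icc hab) hpointwise
  rw [intervalIntegral.integral_add, intervalIntegral.integral_const_mul,
    intervalIntegral.integral_const_mul, intervalIntegral.integral_const_mul, integral_id] at hint
  · linarith
  · exact ((hgc.pow 2).mul continuousOn_id |>.intervalIntegrable_of_Icc hab).const_mul 2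
  · exact (continuous_const.mul continuous_id).intervalIntegrable (μ := volume) a b

lemma sq_apply_smul_mul_le {E : Type*} [NormedAddCommGroup E] [NormedSpace ℝ E] {φ : E → ℝ}
    (hφ : ContDiff ℝ 1 φ) {u : E} (hu : ‖u‖ = 1) {a b : ℝ} (ha : 0 < a) (hab : a ≤ b) :
    φ (a • u) ^ 2 * ((b ^ 2 - a ^ 2) / 2)
      ≤ 2 * (∫ r in a..b, φ (r • u) ^ 2 * r)
        + (b ^ 2 - a ^ 2) * log (b / a) * ∫ r in a..b, ‖fderiv ℝ φ (r • u)‖ ^ 2 * r := by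
  have hDφ : Continuous (fderiv ℝ φ) := hφ.continuous_fderiv one_ne_zero
  have hderiv (s : ℝ) : HasDerivAt (fun r ↦ φ (r • u)) (fderiv ℝ φ (s • u) u) s := by
    have hline : HasDerivAt (fun r : ℝ ↦ r • u) u s := by
      simpa using (hasDerivAt_id s).smul_const u
    exact ((hφ.differentiable one_ne_zero) _).hasFDerivAt.comp_hasDerivAt s hline
  have hradial : Continuous fun s : ℝ ↦ fderiv ℝ φ (s • u) u := by fun_prop
  have hmono : ∫ s in a..b, fderiv ℝ φ (s • u) u ^ 2 * s
      ≤ ∫ r in a..b, ‖fderiv ℝ φ (r • u)‖ ^ 2 * r := by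
    refine intervalIntegral.integral_mono_on hab (Continuous.intervalIntegrable (by fun_prop) _ _)
      (Continuous.intervalIntegrable (by fun_prop) _ _) fun s hs ↦ ?_
    refine mul_le_mul_of_nonneg_right ?_ (ha.le.trans hs.1)
    rw [← sq_abs]
    refine pow_le_pow_left₀ (abs_nonneg _) ?_ 2
    simpa [hu] using (fderiv ℝ φ (s • u)).le_opNorm u
  have hcoeff : 0 ≤ (b ^ 2 - a ^ 2) * log (b / a) :=
    mul_nonneg (by nlinarith) (log_nonneg ((one_le_div ha).2 hab))
  nlinarith [mul_le_mul_of_nonneg_left hmono hcoeff,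
    sq_left_mul_le_of_hasDerivAt ha hab (fun s _ ↦ hderiv s) hradial.continuousOn]

lemma integral_sq_circle_mul_le {φ : EuclideanSpace ℝ (Fin 2) → ℝ} (hφ : ContDiff ℝ 1 φ)
    {a b : ℝ} (ha : 0 < a) (hab : a ≤ b) :
    (∫ θ in 0..2 * π, φ (polarPoint a θ) ^ 2) * ((b ^ 2 - a ^ 2) / 2)
      ≤ 2 * (∫ x in Metric.closedBall 0 b \ Metric.ball 0 a, φ x ^ 2)
        + (b ^ 2 - a ^ 2) * log (b / a)
          * ∫ x in Metric.closedBall 0 b \ Metric.ball 0 a, ‖fderiv ℝ φ x‖ ^ 2 := by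
  have hDφ : Continuous (fderiv ℝ φ) := hφ.continuous_fderiv one_ne_zero
  have hradial {F : EuclideanSpace ℝ (Fin 2) → ℝ} (hF : Continuous F) :
      Continuous fun θ ↦ ∫ r in a..b, F (polarPoint r θ) ^ 2 * r :=
    intervalIntegral.continuous_parametric_intervalIntegral_of_continuous' (by fun_prop) a b
  rw [integral_annulus_eq_integral_polar ha hab (F := fun x ↦ φ x ^ 2) (by fun_prop),
    integral_annulus_eq_integral_polar ha hab (F := fun x ↦ ‖fderiv ℝ φ x‖ ^ 2) (by fun_prop),
    ← intervalIntegral.integral_mul_const, ← intervalIntegral.integral_const_mul,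
    ← intervalIntegral.integral_const_mul, ← intervalIntegral.integral_add]
  · refine intervalIntegral.integral_mono_on (by positivity)
      (Continuous.intervalIntegrable (by fun_prop) _ _)
      ((((hradial hφ.continuous).const_mul _).add
        ((hradial hDφ.norm).const_mul _)).intervalIntegrable _ _) fun θ _ ↦ ?_
    simpa only [← polarPoint_eq_smul] using
      sq_apply_smul_mul_le hφ (by simp [norm_polarPoint]) ha hab (u := polarPoint 1 θ)
  · exact ((hradial hφ.continuous).const_mul _).intervalIntegrable _ _
  · exact ((hradial hDφ.norm).const_mul _).intervalIntegrable _ _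

/-- Trace inequality on the planar annulus: there is a constant `C > 0` such that
for every `0 < ε < 1/2` and every (C¹, hence `W^{1,2}`) function `φ` on the annulus
`B₁ \ B_ε ⊂ ℝ²`, the squared `L²` norm of `φ` on the circle `∂B_ε` (arclength
measure, parametrized by `θ ↦ (ε cos θ, ε sin θ)` with length element `ε dθ`) is at
most `C ε log(1/ε)` times the squared `W^{1,2}` norm of `φ` on the annulus. -/
theorem stmt9 :
    ∃ C : ℝ, 0 < C ∧
      ∀ ε : ℝ, 0 < ε → ε < 1 / 2 →
        ∀ φ : EuclideanSpace ℝ (Fin 2) → ℝ, ContDiff ℝ 1 φ →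
          (∫ θ in (0 : ℝ)..(2 * π),
              (φ ((EuclideanSpace.equiv (Fin 2) ℝ).symm ![ε * Real.cos θ, ε * Real.sin θ])) ^ 2 * ε)
            ≤ C * ε * Real.log (1 / ε) *
              ((∫ x in Metric.closedBall (0 : EuclideanSpace ℝ (Fin 2)) 1 \ Metric.ball 0 ε,
                  (φ x) ^ 2)
                + ∫ x in Metric.closedBall (0 : EuclideanSpace ℝ (Fin 2)) 1 \ Metric.ball 0 ε,
                    ‖fderiv ℝ φ x‖ ^ 2) := by
  refine ⟨16 / (3 * log 2) + 2, by positivity, fun ε hε hε2 φ hφ ↦ ?_⟩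
  have htrace := integral_sq_circle_mul_le hφ hε (b := 1) (by linarith)
  rw [intervalIntegral.integral_mul_const]
  change (∫ θ in 0..2 * π, φ (polarPoint ε θ) ^ 2) * ε ≤ _
  set S := ∫ θ in 0..2 * π, φ (polarPoint ε θ) ^ 2
  set A := ∫ x in Metric.closedBall (0 : EuclideanSpace ℝ (Fin 2)) 1 \ Metric.ball 0 ε, φ x ^ 2
  set B := ∫ x in Metric.closedBall (0 : EuclideanSpace ℝ (Fin 2)) 1 \ Metric.ball 0 ε,
    ‖fderiv ℝ φ x‖ ^ 2
  set L := log (1 / ε)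
  set c := 16 / (3 * log 2) with hc_def
  have hA : 0 ≤ A := integral_nonneg fun _ ↦ sq_nonneg _
  have hB : 0 ≤ B := integral_nonneg fun _ ↦ sq_nonneg _
  have hlog2 : log 2 ≤ L := log_le_log two_pos (by rw [le_div_iff₀ hε]; linarith)
  have hL : 0 < L := (log_pos one_lt_two).trans_le hlog2
  have hS_le : S ≤ 16 / 3 * A + 2 * L * B := by
    rw [one_pow] at htrace
    have hd : 3 / 8 ≤ (1 - ε ^ 2) / 2 := by nlinarith
    nlinarith [mul_nonneg (sub_nonneg.2 hd) hA]
  have hA_le : 16 / 3 * A ≤ c * L * A := calc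
    16 / 3 * A = c * log 2 * A := by rw [hc_def]; field_simp
    _ ≤ c * L * A := by gcongr
  have hc : 0 ≤ c := by positivity
  nlinarith [mul_nonneg (mul_nonneg hε.le hL.le) hA, mul_nonneg (mul_nonneg hε.le hL.le) hB]
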